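/- arXiv:1803.01332 — 2 statements merged into one kernel-verified Lean document; each statement's English description precedes it below -/
import Mathlib

section
/- Let X be a normal Hausdorff space. If any one of the six spaces (L(X), τ_V), (L(X), τ_V⁺), (L₀(X), τ_V), (L₀(X), τ_V⁺), (MC(X), τ_V), (MC(X), τ_V⁺) satisfies the countable chain condition (every pairwise disjoint family of nonempty open sets is countable), then X is compact and metrizable. -/
/-!
For continuous `f`, the upper Vietoris open set of maps lying in the `ε/2`-tube around the graph
of `f` contains that graph, and for `ε`-separated `f`, `g` these sets are disjoint. So the
countable chain condition makes every uniformly `ε`-separated family of continuous functions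
countable. By Tietze, an infinite closed discrete subset of `X` would carry uncountably many
`1`-separated functions, so `X` is countably compact. A maximal `1`-separated family `M` is
countable and approximates every continuous function within `1`; by complete regularity this
makes `x ↦ (g x)_{g ∈ M}` an embedding into `ℝ^M`. Hence `X` is metrizable and second countable,
thus Lindelöf, and a countably compact Lindelöf space is compact.
-/

open Set Topology TopologicalSpace

/-- The set of values of a set-valued map (identified with its graph) at a point. -/
def valuesAt {X : Type*} (F : Set (X × ℝ)) (x : X) : Set ℝ := {y | (x, y) ∈ F}

/-- A set-valued map (identified with its graph) is cusco: upper semicontinuous at every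
point, with nonempty compact convex values. -/
def IsCusco {X : Type*} [TopologicalSpace X] (F : Set (X × ℝ)) : Prop :=
  (∀ x : X, ∀ V : Set ℝ, IsOpen V → valuesAt F x ⊆ V →
    ∃ U : Set X, IsOpen U ∧ x ∈ U ∧ ∀ u ∈ U, valuesAt F u ⊆ V) ∧
  (∀ x : X, (valuesAt F x).Nonempty ∧ IsCompact (valuesAt F x) ∧ Convex ℝ (valuesAt F x))

/-- A minimal cusco map, i.e. a cusco map containing no proper cusco submap. -/
def IsMinimalCusco {X : Type*} [TopologicalSpace X] (F : Set (X × ℝ)) : Prop :=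
  IsCusco F ∧ ∀ G : Set (X × ℝ), IsCusco G → G ⊆ F → G = F

/-- `L(X)`: all cusco maps from `X` to `ℝ`. -/
def LSet (X : Type*) [TopologicalSpace X] : Set (Set (X × ℝ)) := {F | IsCusco F}

/-- `L₀(X)`: cusco maps that are single-valued at each isolated point. -/
def L0Set (X : Type*) [TopologicalSpace X] : Set (Set (X × ℝ)) :=
  {F | IsCusco F ∧ ∀ x : X, IsOpen ({x} : Set X) → ∃ y : ℝ, valuesAt F x = {y}}

/-- `MC(X)`: all minimal cusco maps from `X` to `ℝ`. -/
def MCSet (X : Type*) [TopologicalSpace X] : Set (Set (X × ℝ)) := {F | IsMinimalCusco F}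

/-- The upper Vietoris topology on a family of subsets of `X × ℝ`. -/
def upperVietoris {X : Type*} [TopologicalSpace X] (S : Set (Set (X × ℝ))) :
    TopologicalSpace S :=
  .generateFrom {U | ∃ W : Set (X × ℝ), IsOpen W ∧ U = {A : S | (A : Set (X × ℝ)) ⊆ W}}

/-- The Vietoris topology on a family of subsets of `X × ℝ`. -/
def vietoris {X : Type*} [TopologicalSpace X] (S : Set (Set (X × ℝ))) :
    TopologicalSpace S :=
  .generateFrom
    ({U | ∃ W : Set (X × ℝ), IsOpen W ∧ U = {A : S | (A : Set (X × ℝ)) ⊆ W}} ∪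
     {U | ∃ W : Set (X × ℝ), IsOpen W ∧ U = {A : S | ((A : Set (X × ℝ)) ∩ W).Nonempty}})

/-- The graph of a function `X → ℝ`. -/
def graphOf {X : Type*} (f : X → ℝ) : Set (X × ℝ) := {p | p.2 = f p.1}

/-- `X` is countably compact: every countable open cover has a finite subcover. -/
def CountablyCompact (X : Type*) [TopologicalSpace X] : Prop :=
  ∀ U : ℕ → Set X, (∀ n, IsOpen (U n)) → (⋃ n, U n) = Set.univ →
    ∃ t : Finset ℕ, (⋃ n ∈ t, U n) = Set.univ

/-- A topology satisfies the countable chain condition if every pairwise disjoint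
family of nonempty open sets is countable. -/
def HasCCC {Y : Type*} (t : TopologicalSpace Y) : Prop :=
  ∀ 𝒞 : Set (Set Y), (∀ U ∈ 𝒞, IsOpen[t] U ∧ U.Nonempty) → 𝒞.PairwiseDisjoint id →
    𝒞.Countable

section

variable {X : Type*}

def tube (f : X → ℝ) (r : ℝ) : Set (X × ℝ) := {p | dist p.2 (f p.1) < r}

lemma graphOf_subset_tube (f : X → ℝ) {r : ℝ} (hr : 0 < r) : graphOf f ⊆ tube f r := by
  intro p (hp : p.2 = f p.1)
  show dist p.2 (f p.1) < r
  rwa [hp, dist_self]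

lemma dist_lt_of_subset_tube {A : Set (X × ℝ)} {x : X} (hA : (valuesAt A x).Nonempty)
    {f g : X → ℝ} {r : ℝ} (hf : A ⊆ tube f r) (hg : A ⊆ tube g r) :
    dist (f x) (g x) < 2 * r := by
  obtain ⟨y, hy⟩ := hA
  calc dist (f x) (g x) ≤ dist y (f x) + dist y (g x) := dist_triangle_left _ _ _
    _ < r + r := add_lt_add (hf hy) (hg hy)
    _ = 2 * r := by ring

lemma valuesAt_graphOf (f : X → ℝ) (x : X) : valuesAt (graphOf f) x = {f x} := rfl

variable [TopologicalSpace X]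

lemma isOpen_tube {f : X → ℝ} (hf : Continuous f) (r : ℝ) : IsOpen (tube f r) :=
  isOpen_lt (continuous_snd.dist (hf.comp continuous_fst)) continuous_const

def UniformlySeparated (ε : ℝ) (T : Set C(X, ℝ)) : Prop :=
  T.Pairwise fun f g => ∃ x, ε ≤ dist (f x) (g x)

lemma IsCusco.nonempty {F : Set (X × ℝ)} (hF : IsCusco F) (x : X) : (valuesAt F x).Nonempty :=
  (hF.2 x).1

lemma isCusco_graphOf (f : C(X, ℝ)) : IsCusco (graphOf f) := by
  refine ⟨fun x V hV hxV => ⟨f ⁻¹' V, hV.preimage f.continuous, hxV rfl, ?_⟩, fun x => ?_⟩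
  · rintro u hu y (rfl : y = f u)
    exact hu
  · rw [valuesAt_graphOf]
    exact ⟨singleton_nonempty (f x), isCompact_singleton, convex_singleton (f x)⟩

/-- A single-valued map has no proper submap with nonempty values. -/
lemma isMinimalCusco_graphOf (f : C(X, ℝ)) : IsMinimalCusco (graphOf f) := by
  refine ⟨isCusco_graphOf f, fun G hG hGf => hGf.antisymm ?_⟩
  rintro ⟨x, y⟩ (rfl : y = f x)
  obtain ⟨z, hz⟩ := hG.nonempty x
  obtain rfl : z = f x := hGf hz
  exact hz

lemma graphOf_mem_L0Set (f : C(X, ℝ)) : graphOf f ∈ L0Set X :=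
  ⟨isCusco_graphOf f, fun x _ => ⟨f x, rfl⟩⟩

lemma HasCCC.mono {Y : Type*} {t₁ t₂ : TopologicalSpace Y} (h : t₁ ≤ t₂) (h₁ : HasCCC t₁) :
    HasCCC t₂ :=
  fun 𝒞 h𝒞 hdisj => h₁ 𝒞 (fun U hU => ⟨h U (h𝒞 U hU).1, (h𝒞 U hU).2⟩) hdisj

lemma vietoris_le_upperVietoris (S : Set (Set (X × ℝ))) : vietoris S ≤ upperVietoris S :=
  TopologicalSpace.generateFrom_anti subset_union_left

lemma isOpen_upperVietoris (S : Set (Set (X × ℝ))) {W : Set (X × ℝ)} (hW : IsOpen W) :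
    IsOpen[upperVietoris S] {A : S | (A : Set (X × ℝ)) ⊆ W} :=
  TopologicalSpace.isOpen_generateFrom_of_mem ⟨W, hW, rfl⟩

lemma UniformlySeparated.countable_of_hasCCC {S : Set (Set (X × ℝ))}
    (hgraph : ∀ f : C(X, ℝ), graphOf f ∈ S) (hne : ∀ A ∈ S, ∀ x, (valuesAt A x).Nonempty)
    (hccc : HasCCC (upperVietoris S)) {ε : ℝ} (hε : 0 < ε) {T : Set C(X, ℝ)}
    (hT : UniformlySeparated ε T) : T.Countable := by
  set c : C(X, ℝ) → Set S := fun f => {A | (A : Set (X × ℝ)) ⊆ tube f (ε / 2)}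
  have hgraph_mem (f : C(X, ℝ)) : (⟨graphOf f, hgraph f⟩ : S) ∈ c f :=
    graphOf_subset_tube f (half_pos hε)
  have hdisj : T.Pairwise fun f g => Disjoint (c f) (c g) := by
    intro f hf g hg hfg
    refine Set.disjoint_left.2 fun A hAf hAg => ?_
    obtain ⟨x, hx⟩ := hT hf hg hfg
    have := dist_lt_of_subset_tube (hne A A.2 x) hAf hAg
    linarith
  have hinj : T.InjOn c := by
    intro f hf g hg hfg
    by_contra hne
    exact (hdisj hf hg hne).le_bot ⟨hgraph_mem f, hfg ▸ hgraph_mem f⟩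
  refine (mapsTo_image c T).countable_of_injOn hinj (hccc _ ?_ ?_)
  · rintro _ ⟨f, -, rfl⟩
    exact ⟨isOpen_upperVietoris S (isOpen_tube f.continuous _), _, hgraph_mem f⟩
  · rintro _ ⟨f, hf, rfl⟩ _ ⟨g, hg, rfl⟩ hcfg
    exact hdisj hf hg fun hfg => hcfg (congrArg c hfg)

lemma UniformlySeparated.countable_of_hasCCC_vietoris {S : Set (Set (X × ℝ))}
    (hgraph : ∀ f : C(X, ℝ), graphOf f ∈ S) (hne : ∀ A ∈ S, ∀ x, (valuesAt A x).Nonempty)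
    (hccc : HasCCC (vietoris S)) {ε : ℝ} (hε : 0 < ε) {T : Set C(X, ℝ)}
    (hT : UniformlySeparated ε T) : T.Countable :=
  hT.countable_of_hasCCC hgraph hne (hccc.mono (vietoris_le_upperVietoris S)) hε

lemma not_countable_set_of_infinite (α : Type*) [Infinite α] : ¬ Countable (Set α) := by
  rw [← Cardinal.mk_le_aleph0_iff, Cardinal.mk_set, not_le]
  exact (Cardinal.aleph0_le_mk α).trans_lt (Cardinal.cantor _)

/-- Tietze extensions of the indicator functions of the subsets of `B`. -/
lemma exists_not_countable_uniformlySeparated [NormalSpace X] {B : Set X} (hB : IsClosed B)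
    [DiscreteTopology B] [Infinite B] :
    ∃ T : Set C(X, ℝ), UniformlySeparated 1 T ∧ ¬ T.Countable := by
  classical
  have hext (A : Set B) : ∃ g : C(X, ℝ), ∀ b : B, g b = if b ∈ A then 1 else 0 := by
    obtain ⟨g, hg⟩ := ContinuousMap.exists_restrict_eq hB
      ⟨fun b : B => if b ∈ A then (1 : ℝ) else 0, continuous_of_discreteTopology⟩
    exact ⟨g, fun b => ContinuousMap.congr_fun hg b⟩
  choose g hg using hext
  have hsep {A A' : Set B} (hAA' : A ≠ A') : ∃ b : B, 1 ≤ dist (g A b) (g A' b) := by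
    obtain ⟨b, hb⟩ : ∃ b, ¬ (b ∈ A ↔ b ∈ A') := not_forall.1 fun h => hAA' (Set.ext h)
    refine ⟨b, ?_⟩
    by_cases hbA : b ∈ A <;> by_cases hbA' : b ∈ A' <;> simp_all
  have hinj : Function.Injective g := fun A A' hAA' => by_contra fun hne => by
    obtain ⟨b, hb⟩ := hsep hne
    norm_num [hAA'] at hb
  refine ⟨range g, ?_, fun hT => not_countable_set_of_infinite B ?_⟩
  · rintro _ ⟨A, rfl⟩ _ ⟨A', rfl⟩ hAA'
    obtain ⟨b, hb⟩ := hsep (ne_of_apply_ne g hAA')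
    exact ⟨b, hb⟩
  · have := hT.to_subtype
    exact (Set.injective_codRestrict (f := g) (fun A => mem_range_self A)).2 hinj |>.countable

lemma countablyCompactSpace_of_uniformlySeparated_countable [T1Space X] [NormalSpace X]
    (h : ∀ T : Set C(X, ℝ), UniformlySeparated 1 T → T.Countable) : CountablyCompactSpace X := by
  by_contra hX
  rw [← isCountablyCompact_univ_iff, isCountablyCompact_iff_infinite_subset_has_accPt] at hX
  push Not at hX
  obtain ⟨B, -, hBinf, hB⟩ := hX
  have : DiscreteTopology B := discreteTopology_of_noAccPts fun x _ => hB x (mem_univ x)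
  have : Infinite B := hBinf.to_subtype
  obtain ⟨T, hT, hTc⟩ := exists_not_countable_uniformlySeparated
    (isClosed_iff_accPt.2 fun x hx => absurd hx (hB x (mem_univ x)))
  exact hTc (h T hT)

lemma exists_uniformlySeparated_forall_exists_dist_lt {ε : ℝ} (hε : 0 < ε) :
    ∃ M : Set C(X, ℝ), UniformlySeparated ε M ∧
      ∀ f : C(X, ℝ), ∃ g ∈ M, ∀ x, dist (f x) (g x) < ε := by
  obtain ⟨M, hM⟩ := zorn_subset {T : Set C(X, ℝ) | UniformlySeparated ε T}
    fun c hc hchain => ⟨⋃₀ c, hchain.pairwise_sUnion.2 hc, fun _ => subset_sUnion_of_mem⟩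
  refine ⟨M, hM.prop, fun f => ?_⟩
  by_cases hfM : f ∈ M
  · exact ⟨f, hfM, fun x => by simpa using hε⟩
  · have hins : ¬ UniformlySeparated ε (insert f M) := fun hins =>
      hfM (hM.2 hins (subset_insert f M) (mem_insert f M))
    have : Std.Symm fun f g : C(X, ℝ) => ∃ x, ε ≤ dist (f x) (g x) :=
      ⟨fun f g ⟨x, hx⟩ => ⟨x, dist_comm (f x) (g x) ▸ hx⟩⟩
    simp only [UniformlySeparated, pairwise_insert_of_symm, not_and, not_forall,
      not_exists, not_le] at hins
    obtain ⟨g, hgM, -, hg⟩ := hins hM.prop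
    exact ⟨g, hgM, hg⟩

lemma isInducing_of_forall_exists_dist_lt [CompletelyRegularSpace X] {M : Set C(X, ℝ)} {ε : ℝ}
    (hε : 0 < ε) (hM : ∀ f : C(X, ℝ), ∃ g ∈ M, ∀ x, dist (f x) (g x) < ε) :
    IsInducing fun x (g : M) => g.1 x := by
  have hcont : Continuous fun x (g : M) => g.1 x := continuous_pi fun g => g.1.continuous
  refine isInducing_iff_nhds.2 fun x => le_antisymm (hcont.tendsto x).le_comap ?_
  intro U hU
  obtain ⟨f, hf, hfx, hfK⟩ := CompletelyRegularSpace.completely_regular x (interior U)ᶜ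
    isOpen_interior.isClosed_compl (not_not.2 (mem_interior_iff_mem_nhds.2 hU))
  -- `3 ε f` vanishes at `x` and equals `3 ε` off `U`, so an `ε`-approximation `g` of it moves by
  -- more than `ε` between `x` and any point outside `U`.
  set F : C(X, ℝ) := ⟨fun y => 3 * ε * f y, by fun_prop⟩
  obtain ⟨g, hgM, hg⟩ := hM F
  refine ⟨(fun z : M → ℝ => z ⟨g, hgM⟩) ⁻¹' Metric.ball (g x) ε,
    (continuous_apply _).continuousAt.preimage_mem_nhds (Metric.ball_mem_nhds _ hε), ?_⟩
  intro y (hy : dist (g y) (g x) < ε)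
  by_contra hyU
  have hFx : F x = 0 := by simp [F, hfx]
  have hFy : F y = 3 * ε := by simp [F, hfK fun h => hyU (interior_subset h)]
  have hFxy : dist (F y) (F x) = 3 * ε := by
    rw [hFx, hFy, Real.dist_0_eq_abs, abs_of_pos (by positivity)]
  linarith [dist_triangle4 (F y) (g y) (g x) (F x), hg y, hg x, dist_comm (F x) (g x)]

end

/-- For a normal Hausdorff space `X`: if any of the six spaces `(L(X), τ_V)`,
`(L(X), τ_V⁺)`, `(L₀(X), τ_V)`, `(L₀(X), τ_V⁺)`, `(MC(X), τ_V)`, `(MC(X), τ_V⁺)`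
satisfies the countable chain condition, then `X` is compact and metrizable. -/
theorem compact_metrizable_of_ccc {X : Type*} [TopologicalSpace X] [T2Space X]
    [NormalSpace X]
    (h : HasCCC (vietoris (LSet X)) ∨ HasCCC (upperVietoris (LSet X)) ∨
         HasCCC (vietoris (L0Set X)) ∨ HasCCC (upperVietoris (L0Set X)) ∨
         HasCCC (vietoris (MCSet X)) ∨ HasCCC (upperVietoris (MCSet X))) :
    CompactSpace X ∧ MetrizableSpace X := by
  have hsep : ∀ T : Set C(X, ℝ), UniformlySeparated 1 T → T.Countable := by
    intro T hT
    rcases h with h | h | h | h | h | h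
    · exact hT.countable_of_hasCCC_vietoris isCusco_graphOf (fun A hA => hA.nonempty) h one_pos
    · exact hT.countable_of_hasCCC isCusco_graphOf (fun A hA => hA.nonempty) h one_pos
    · exact hT.countable_of_hasCCC_vietoris graphOf_mem_L0Set (fun A hA => hA.1.nonempty) h one_pos
    · exact hT.countable_of_hasCCC graphOf_mem_L0Set (fun A hA => hA.1.nonempty) h one_pos
    · exact hT.countable_of_hasCCC_vietoris isMinimalCusco_graphOf (fun A hA => hA.1.nonempty) h
        one_pos
    · exact hT.countable_of_hasCCC isMinimalCusco_graphOf (fun A hA => hA.1.nonempty) h one_pos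
  have : CountablyCompactSpace X := countablyCompactSpace_of_uniformlySeparated_countable hsep
  obtain ⟨M, hMsep, hMapprox⟩ := exists_uniformlySeparated_forall_exists_dist_lt (X := X) one_pos
  have : Countable M := (hsep M hMsep).to_subtype
  have hemb := (isInducing_of_forall_exists_dist_lt one_pos hMapprox).isEmbedding
  have := hemb.metrizableSpace
  have := hemb.secondCountableTopology
  exact ⟨LindelofSpace.compactSpace, inferInstance⟩
end

section
/- Let X be a countably paracompact normal Hausdorff space. Then the space MC(X) of minimal cusco maps from X to ℝ, equipped with the upper Vietoris topology τ_V⁺, is regular. -/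
open Set Topology TopologicalSpace

/-- `X` is countably paracompact: every countable open cover has a locally finite
open refinement. -/
def CountablyParacompact (X : Type*) [TopologicalSpace X] : Prop :=
  ∀ U : ℕ → Set X, (∀ n, IsOpen (U n)) → (⋃ n, U n) = Set.univ →
    ∃ (ι : Type) (V : ι → Set X), (∀ i, IsOpen (V i)) ∧ (⋃ i, V i) = Set.univ ∧
      LocallyFinite V ∧ ∀ i, ∃ n, V i ⊆ U n

set_option linter.unusedSectionVars false

section Helpers

variable {X : Type*} [TopologicalSpace X] {F : Set (X × ℝ)}

theorem real_sSup_neg (s : Set ℝ) : sSup (-s) = -sInf s := by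
  rw [Real.sInf_def, neg_neg]

theorem neg_neg_set (s : Set ℝ) : - -s = s := by
  ext y; simp [Set.mem_neg]

theorem real_sInf_neg (s : Set ℝ) : sInf (-s) = -sSup s := by
  rw [Real.sInf_def, neg_neg_set]

theorem IsCusco.valuesAt_eq_Icc (hF : IsCusco F) (x : X) :
    valuesAt F x = Icc (sInf (valuesAt F x)) (sSup (valuesAt F x)) := by
  obtain ⟨hne, hcpt, hconv⟩ := hF.2 x
  apply Subset.antisymm
  · exact fun y hy => ⟨csInf_le hcpt.bddBelow hy, le_csSup hcpt.bddAbove hy⟩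
  · exact fun y hy => hconv.ordConnected.out (hcpt.sInf_mem hne) (hcpt.sSup_mem hne) hy

theorem IsCusco.sInf_mem (hF : IsCusco F) (x : X) : sInf (valuesAt F x) ∈ valuesAt F x :=
  (hF.2 x).2.1.sInf_mem (hF.2 x).1

theorem IsCusco.sSup_mem (hF : IsCusco F) (x : X) : sSup (valuesAt F x) ∈ valuesAt F x :=
  (hF.2 x).2.1.sSup_mem (hF.2 x).1

theorem IsCusco.sInf_le_sSup (hF : IsCusco F) (x : X) :
    sInf (valuesAt F x) ≤ sSup (valuesAt F x) :=
  le_csSup (hF.2 x).2.1.bddAbove (hF.sInf_mem x)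

theorem IsCusco.usc_sSup (hF : IsCusco F) :
    UpperSemicontinuous (fun x => sSup (valuesAt F x)) := by
  intro x y hy
  obtain ⟨c, hc1, hc2⟩ := exists_between hy
  have hsub : valuesAt F x ⊆ Iio c := fun z hz =>
    lt_of_le_of_lt (le_csSup (hF.2 x).2.1.bddAbove hz) hc1
  obtain ⟨U, hUo, hxU, hU⟩ := hF.1 x _ isOpen_Iio hsub
  filter_upwards [hUo.mem_nhds hxU] with u hu
  exact lt_of_le_of_lt (csSup_le (hF.2 u).1 (fun z hz => le_of_lt (hU u hu hz))) hc2

theorem IsCusco.lsc_sInf (hF : IsCusco F) :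
    LowerSemicontinuous (fun x => sInf (valuesAt F x)) := by
  intro x y hy
  obtain ⟨c, hc1, hc2⟩ := exists_between hy
  have hsub : valuesAt F x ⊆ Ioi c := fun z hz =>
    lt_of_lt_of_le hc2 (csInf_le (hF.2 x).2.1.bddBelow hz)
  obtain ⟨U, hUo, hxU, hU⟩ := hF.1 x _ isOpen_Ioi hsub
  filter_upwards [hUo.mem_nhds hxU] with u hu
  exact lt_of_lt_of_le hc1 (le_csInf (hF.2 u).1 (fun z hz => le_of_lt (hU u hu hz)))

/-- Negation transport -/
def negGraph {X : Type*} (F : Set (X × ℝ)) : Set (X × ℝ) :=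
  (fun p : X × ℝ => (p.1, -p.2)) ⁻¹' F

theorem valuesAt_negGraph (F : Set (X × ℝ)) (x : X) :
    valuesAt (negGraph F) x = -(valuesAt F x) := rfl

theorem IsCusco.negGraph (hF : IsCusco F) : IsCusco (negGraph F) := by
  constructor
  · intro x V hVo hsub
    have hsub' : valuesAt F x ⊆ -V := by
      intro y hy
      have : -y ∈ valuesAt (_root_.negGraph F) x := by
        simp [valuesAt_negGraph, Set.mem_neg, neg_neg, hy]
      simpa [Set.mem_neg] using hsub this
    obtain ⟨U, hUo, hxU, hU⟩ := hF.1 x _ hVo.neg hsub'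
    refine ⟨U, hUo, hxU, fun u hu y hy => ?_⟩
    have : -y ∈ valuesAt F u := hy
    simpa [Set.mem_neg] using hU u hu this
  · intro x
    obtain ⟨hne, hcpt, hconv⟩ := hF.2 x
    rw [valuesAt_negGraph]
    have himg : -(valuesAt F x) = (fun y : ℝ => -y) '' valuesAt F x := by
      ext y
      constructor
      · exact fun h => ⟨-y, h, by simp⟩
      · rintro ⟨z, hz, rfl⟩; simpa [Set.mem_neg] using hz
    refine ⟨hne.neg, ?_, hconv.neg⟩
    rw [himg]
    exact hcpt.image continuous_neg

end Helpers

section Dowker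

variable {X : Type*} [TopologicalSpace X] [NormalSpace X]

theorem dowker_core (hcp : CountablyParacompact X) (U : ℕ → Set X) (hUo : ∀ n, IsOpen (U n))
    (hUc : (⋃ n, U n) = univ) (r : ℕ → ℝ) :
    ∃ f : X → ℝ, Continuous f ∧
      (∀ x a, (∀ n, x ∈ U n → a < r n) → a < f x) ∧
      (∀ x b, (∀ n, x ∈ U n → r n < b) → f x < b) := by
  obtain ⟨ι, V, hVo, hVc, hVlf, hVsub⟩ := hcp U hUo hUc
  choose nn hnn using hVsub
  obtain ⟨bc, hbc⟩ := BumpCovering.exists_isSubordinate_of_locallyFinite isClosed_univ V hVo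
    hVlf (by rw [hVc])
  set ρ := bc.toPartitionOfUnity with hρ
  have hρsub : ρ.IsSubordinate V := hbc.toPartitionOfUnity
  refine ⟨fun x => ∑ᶠ i, ρ i x • r (nn i),
    hρsub.continuous_finsum_smul hVo (fun i => continuousOn_const), ?_, ?_⟩
  all_goals {
    intro x a ha
    have hfs : (fun x => ∑ᶠ i, ρ i x • r (nn i)) x
        = ∑ i ∈ ρ.finsupport x, ρ i x • r (nn i) :=
      (ρ.sum_finsupport_smul_eq_finsum (fun i _ => r (nn i))).symm
    have hne : (ρ.finsupport x).Nonempty := by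
      by_contra h
      rw [Finset.not_nonempty_iff_eq_empty] at h
      have := ρ.sum_finsupport (mem_univ x)
      rw [h] at this
      simp at this
    have hmemU : ∀ i ∈ ρ.finsupport x, x ∈ U (nn i) := by
      intro i hi
      rw [ρ.mem_finsupport] at hi
      exact hnn i (hρsub i (subset_tsupport _ hi))
    have hpos : ∀ i ∈ ρ.finsupport x, 0 < ρ i x := by
      intro i hi
      rw [ρ.mem_finsupport] at hi
      exact lt_of_le_of_ne (ρ.nonneg i x) (Ne.symm hi)
    have hsum1 : ∑ i ∈ ρ.finsupport x, ρ i x = 1 := ρ.sum_finsupport (mem_univ x)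
    rw [hfs]
    first
    | · calc a = ∑ i ∈ ρ.finsupport x, ρ i x * a := by rw [← Finset.sum_mul, hsum1, one_mul]
          _ < ∑ i ∈ ρ.finsupport x, ρ i x • r (nn i) := by
              refine Finset.sum_lt_sum_of_nonempty hne (fun i hi => ?_)
              exact (mul_lt_mul_iff_right₀ (hpos i hi)).mpr (ha _ (hmemU i hi))
    | · calc ∑ i ∈ ρ.finsupport x, ρ i x • r (nn i)
            < ∑ i ∈ ρ.finsupport x, ρ i x * a := by
              refine Finset.sum_lt_sum_of_nonempty hne (fun i hi => ?_)
              exact (mul_lt_mul_iff_right₀ (hpos i hi)).mpr (ha _ (hmemU i hi))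
          _ = a := by rw [← Finset.sum_mul, hsum1, one_mul]
  }

theorem dowker_insertion (hcp : CountablyParacompact X) {φ ψ : X → ℝ}
    (hφ : UpperSemicontinuous φ) (hψ : LowerSemicontinuous ψ) (h : ∀ x, φ x < ψ x) :
    ∃ f : X → ℝ, Continuous f ∧ ∀ x, φ x < f x ∧ f x < ψ x := by
  set q : ℕ → ℚ := fun n => (Denumerable.eqv ℚ).symm n with hq
  set U : ℕ → Set X := fun n => {x | φ x < (q n : ℝ)} ∩ {x | (q n : ℝ) < ψ x} with hU
  have hUo : ∀ n, IsOpen (U n) := fun n =>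
    (hφ.isOpen_preimage _).inter (hψ.isOpen_preimage _)
  have hUc : (⋃ n, U n) = univ := by
    refine eq_univ_of_forall (fun x => ?_)
    obtain ⟨ρ, hρ1, hρ2⟩ := exists_rat_btwn (h x)
    exact mem_iUnion.mpr ⟨Denumerable.eqv ℚ ρ, by simp [hU, hq, hρ1, hρ2]⟩
  obtain ⟨f, hf, hlow, hhigh⟩ := dowker_core hcp U hUo hUc (fun n => (q n : ℝ))
  refine ⟨f, hf, fun x => ⟨?_, ?_⟩⟩
  · exact hlow x (φ x) (fun n hn => hn.1)
  · exact hhigh x (ψ x) (fun n hn => hn.2)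

theorem dowker_above (hcp : CountablyParacompact X) {φ : X → ℝ}
    (hφ : UpperSemicontinuous φ) : ∃ f : X → ℝ, Continuous f ∧ ∀ x, φ x < f x := by
  set U : ℕ → Set X := fun n => {x | φ x < (n : ℝ)} with hU
  have hUo : ∀ n, IsOpen (U n) := fun n => hφ.isOpen_preimage _
  have hUc : (⋃ n, U n) = univ := by
    refine eq_univ_of_forall (fun x => ?_)
    obtain ⟨n, hn⟩ := exists_nat_gt (φ x)
    exact mem_iUnion.mpr ⟨n, hn⟩
  obtain ⟨f, hf, hlow, _⟩ := dowker_core hcp U hUo hUc (fun n => (n : ℝ))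
  exact ⟨f, hf, fun x => hlow x (φ x) (fun n hn => hn)⟩

end Dowker

section Roof

theorem exists_delta_Ioo {a b : ℝ} {v : Set ℝ} (hv : IsOpen v) (h : Icc a b ⊆ v) :
    ∃ δ > 0, Ioo (a - δ) (b + δ) ⊆ v := by
  rcases lt_or_ge b a with hba | hab
  · refine ⟨(a - b) / 2, by linarith, fun y hy => ?_⟩
    exfalso
    have h1 := hy.1
    have h2 := hy.2
    linarith
  · obtain ⟨δ, hδ, hsub⟩ := isCompact_Icc.exists_thickening_subset_open hv h
    refine ⟨δ, hδ, fun y hy => hsub ?_⟩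
    rw [Metric.mem_thickening_iff]
    rcases le_total y a with h1 | h1
    · exact ⟨a, ⟨le_refl a, hab⟩, by rw [Real.dist_eq]; rw [abs_lt]; constructor <;>
        [linarith [hy.1]; linarith]⟩
    · rcases le_total y b with h2 | h2
      · exact ⟨y, ⟨h1, h2⟩, by simp [hδ]⟩
      · exact ⟨b, ⟨hab, le_refl b⟩, by rw [Real.dist_eq, abs_lt]; constructor <;>
          [linarith; linarith [hy.2]]⟩

variable {X : Type*} [TopologicalSpace X] [NormalSpace X]

theorem exists_upper_roof (hcp : CountablyParacompact X) {F W : Set (X × ℝ)}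
    (hF : IsCusco F) (hW : IsOpen W) (hFW : F ⊆ W) :
    ∃ h : X → ℝ, Continuous h ∧ ∀ x, sSup (valuesAt F x) < h x ∧
      ∀ y ∈ Icc (sInf (valuesAt F x)) (h x), (x, y) ∈ W := by
  set m : X → ℝ := fun x => sInf (valuesAt F x) with hm
  set M : X → ℝ := fun x => sSup (valuesAt F x) with hM
  have hmM : ∀ x, m x ≤ M x := hF.sInf_le_sSup
  obtain ⟨k, hkc, hk⟩ := dowker_above hcp hF.usc_sSup
  set S : X → Set ℝ := fun x => {t | t ≤ k x ∧ ∀ y ∈ Icc (m x) t, (x, y) ∈ W} with hS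
  have hSne : ∀ x, (S x).Nonempty := by
    intro x
    refine ⟨m x - 1, by linarith [hk x, hmM x], fun y hy => absurd hy (by
      rw [Icc_eq_empty (by linarith)]; simp)⟩
  have hSbdd : ∀ x, BddAbove (S x) := fun x => ⟨k x, fun t ht => ht.1⟩
  set β : X → ℝ := fun x => sSup (S x) with hβ
  have hvalsub : ∀ x, ∀ t, M x < t → Icc (m x) t ⊆ {y | (x, y) ∈ W} → t ≤ k x → M x < β x := by
    intro x t ht hsub htk
    exact lt_of_lt_of_le ht (le_csSup (hSbdd x) ⟨htk, hsub⟩)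
  have hβM : ∀ x, M x < β x := by
    intro x
    have hWx : IsOpen {y : ℝ | (x, y) ∈ W} := hW.preimage (Continuous.prodMk_right x)
    have hsub : Icc (m x) (M x) ⊆ {y | (x, y) ∈ W} := by
      intro y hy
      exact hFW (by rw [← hF.valuesAt_eq_Icc x] at hy; exact hy)
    obtain ⟨δ, hδ, hIoo⟩ := exists_delta_Ioo hWx hsub
    refine hvalsub x (min (M x + δ/2) ((M x + k x)/2)) (by
        simp only [lt_min_iff]; exact ⟨by linarith, by linarith [hk x]⟩)
      (fun y hy => hIoo ⟨by linarith [hy.1, hmM x, hδ], by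
        have := hy.2; have h2 : y ≤ M x + δ/2 := le_trans this (min_le_left _ _); linarith⟩)
      (le_trans (min_le_right _ _) (by linarith [hk x]))
  have hβlsc : LowerSemicontinuous β := by
    intro x₀ t ht
    obtain ⟨t', ht'S, ht'⟩ := exists_lt_of_lt_csSup (hSne x₀)
      (show max t (M x₀) < β x₀ from max_lt ht (hβM x₀))
    rw [max_lt_iff] at ht'
    have hIccW : {x₀} ×ˢ Icc (m x₀) t' ⊆ W := by
      rintro ⟨x, y⟩ ⟨hx, hy⟩
      rw [mem_singleton_iff] at hx; subst hx
      exact ht'S.2 y hy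
    obtain ⟨u, v, huo, hvo, hxu, hIv, huv⟩ :=
      generalized_tube_lemma isCompact_singleton isCompact_Icc hW hIccW
    obtain ⟨δ, hδ, hIoo⟩ := exists_delta_Ioo hvo hIv
    -- usc of F
    obtain ⟨U₁, hU₁o, hxU₁, hU₁⟩ := hF.1 x₀ (Ioo (m x₀ - δ) t') isOpen_Ioo (by
      rw [hF.valuesAt_eq_Icc x₀]
      show Icc (m x₀) (M x₀) ⊆ Ioo (m x₀ - δ) t'
      exact Icc_subset_Ioo (by linarith) ht'.2)
    have hkx : k x₀ ∈ Ioi t := lt_of_lt_of_le ht'.1 ht'S.1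
    filter_upwards [huo.mem_nhds (hxu rfl), hU₁o.mem_nhds hxU₁,
      (hkc.continuousAt.preimage_mem_nhds (isOpen_Ioi.mem_nhds hkx))] with z hz1 hz2 hz3
    have hmz : m z ∈ valuesAt F z := hF.sInf_mem z
    have hmz' : m x₀ - δ < m z := (hU₁ z hz2 hmz).1
    have hsz : min (k z) (t' + δ/2) ∈ S z := by
      refine ⟨min_le_left _ _, fun y hy => ?_⟩
      refine huv ⟨hz1, hIoo ⟨by linarith [hy.1], ?_⟩⟩
      have := le_trans hy.2 (min_le_right _ _); linarith
    have : min (k z) (t' + δ/2) ≤ β z := le_csSup (hSbdd z) hsz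
    have ht2 : t < min (k z) (t' + δ/2) := lt_min (mem_Ioi.mp hz3) (by linarith [ht'.1])
    exact lt_of_lt_of_le ht2 this
  obtain ⟨h, hhc, hh⟩ := dowker_insertion hcp hF.usc_sSup hβlsc hβM
  refine ⟨h, hhc, fun x => ⟨(hh x).1, fun y hy => ?_⟩⟩
  obtain ⟨t, htS, hht⟩ := exists_lt_of_lt_csSup (hSne x) (hh x).2
  exact htS.2 y ⟨hy.1, le_trans hy.2 (le_of_lt hht)⟩

theorem exists_lower_roof (hcp : CountablyParacompact X) {F W : Set (X × ℝ)}
    (hF : IsCusco F) (hW : IsOpen W) (hFW : F ⊆ W) :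
    ∃ g : X → ℝ, Continuous g ∧ ∀ x, g x < sInf (valuesAt F x) ∧
      ∀ y ∈ Icc (g x) (sSup (valuesAt F x)), (x, y) ∈ W := by
  have hW' : IsOpen (negGraph W) :=
    hW.preimage (by exact (continuous_fst.prodMk continuous_snd.neg))
  have hFW' : negGraph F ⊆ negGraph W := fun p hp => hFW hp
  obtain ⟨h, hhc, hh⟩ := exists_upper_roof hcp hF.negGraph hW' hFW'
  refine ⟨fun x => -h x, hhc.neg, fun x => ⟨?_, ?_⟩⟩
  · have := (hh x).1
    rw [valuesAt_negGraph, real_sSup_neg] at this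
    show -h x < sInf (valuesAt F x)
    linarith
  · intro y hy
    have hy1 : -h x ≤ y := hy.1
    have hy2 : y ≤ sSup (valuesAt F x) := hy.2
    have h2 := (hh x).2 (-y) (by
      rw [valuesAt_negGraph, real_sInf_neg]
      exact ⟨by linarith, by linarith⟩)
    have : ((x, -y).1, -(x, -y).2) ∈ W := h2
    simpa using this

end Roof

section Tube

variable {X : Type*} [TopologicalSpace X]

theorem valuesAt_inter_tube (A : Set (X × ℝ)) (g h : X → ℝ) (x : X) :
    valuesAt (A ∩ {p | g p.1 ≤ p.2 ∧ p.2 ≤ h p.1}) x = valuesAt A x ∩ Icc (g x) (h x) := by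
  ext y; simp [valuesAt, Set.mem_inter_iff, mem_Icc]

theorem IsCusco.inter_tube {A : Set (X × ℝ)} (hA : IsCusco A) {g h : X → ℝ}
    (hgc : Continuous g) (hhc : Continuous h)
    (hne : ∀ x, (valuesAt A x ∩ Icc (g x) (h x)).Nonempty) :
    IsCusco (A ∩ {p | g p.1 ≤ p.2 ∧ p.2 ≤ h p.1}) := by
  constructor
  · intro x V₀ hV₀o hsub
    rw [valuesAt_inter_tube] at hsub
    set K : Set ℝ := valuesAt A x \ V₀ with hK
    have hKcpt : IsCompact K := (hA.2 x).2.1.inter_right hV₀o.isClosed_compl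
    by_cases hKe : K = ∅
    · have : valuesAt A x ⊆ V₀ := by
        intro y hy
        by_contra hy2
        exact absurd (show y ∈ K from ⟨hy, hy2⟩) (by rw [hKe]; simp)
      obtain ⟨U, hUo, hxU, hU⟩ := hA.1 x V₀ hV₀o this
      refine ⟨U, hUo, hxU, fun u hu => ?_⟩
      rw [valuesAt_inter_tube]
      exact fun y hy => hU u hu hy.1
    · have hKdisj : ∀ y ∈ K, y ∉ Icc (g x) (h x) := by
        intro y hy hy2
        exact hy.2 (hsub ⟨hy.1, hy2⟩)
      have hIccKc : Icc (g x) (h x) ⊆ Kᶜ := fun y hy hy2 => hKdisj y hy2 hy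
      obtain ⟨δ, hδ, hIoo⟩ := exists_delta_Ioo hKcpt.isClosed.isOpen_compl hIccKc
      set V₁ : Set ℝ := V₀ ∪ (Icc (g x - δ/2) (h x + δ/2))ᶜ with hV₁
      have hV₁o : IsOpen V₁ := hV₀o.union isClosed_Icc.isOpen_compl
      have hsub1 : valuesAt A x ⊆ V₁ := by
        intro y hy
        by_cases hyV : y ∈ V₀
        · exact Or.inl hyV
        · have hyK : y ∈ K := ⟨hy, hyV⟩
          refine Or.inr (fun hy2 => ?_)
          exact (hIoo ⟨by linarith [hy2.1], by linarith [hy2.2]⟩) hyK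
      obtain ⟨U₀, hU₀o, hxU₀, hU₀⟩ := hA.1 x V₁ hV₁o hsub1
      set U₁ : Set X := g ⁻¹' Ioi (g x - δ/2) ∩ h ⁻¹' Iio (h x + δ/2) with hU₁d
      have hU₁o : IsOpen U₁ := (isOpen_Ioi.preimage hgc).inter (isOpen_Iio.preimage hhc)
      have hxU₁ : x ∈ U₁ := ⟨by simp; linarith, by simp; linarith⟩
      refine ⟨U₀ ∩ U₁, hU₀o.inter hU₁o, ⟨hxU₀, hxU₁⟩, fun u hu => ?_⟩
      rw [valuesAt_inter_tube]
      rintro y ⟨hy1, hy2⟩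
      rcases hU₀ u hu.1 hy1 with hv | hv
      · exact hv
      · exfalso
        have hgu : g x - δ/2 < g u := hu.2.1
        have hhu : h u < h x + δ/2 := hu.2.2
        exact hv ⟨by linarith [hy2.1], by linarith [hy2.2]⟩
  · intro x
    rw [valuesAt_inter_tube]
    exact ⟨hne x, ((hA.2 x).2.1.inter_right isClosed_Icc),
      (hA.2 x).2.2.inter (convex_Icc _ _)⟩

end Tube

/-- For a countably paracompact normal Hausdorff space `X`, the space `(MC(X), τ_V⁺)`
is regular. -/
theorem MCSet_upperVietoris_regular {X : Type*} [TopologicalSpace X] [T2Space X]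
    [NormalSpace X] (hcp : CountablyParacompact X) :
    @RegularSpace _ (upperVietoris (MCSet X)) := by
  letI τ : TopologicalSpace ↥(MCSet X) := upperVietoris (MCSet X)
  haveI : T4Space X := ⟨⟩
  set B : Set (Set ↥(MCSet X)) :=
    {U | ∃ W : Set (X × ℝ), IsOpen W ∧ U = {A : ↥(MCSet X) | (A : Set (X × ℝ)) ⊆ W}} with hBd
  have hB : IsTopologicalBasis (t := τ) B := by
    refine ⟨?_, ?_, rfl⟩
    · rintro t₁ ⟨W₁, hW₁, rfl⟩ t₂ ⟨W₂, hW₂, rfl⟩ A ⟨h1, h2⟩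
      exact ⟨{A : ↥(MCSet X) | (A : Set (X × ℝ)) ⊆ W₁ ∩ W₂}, ⟨W₁ ∩ W₂, hW₁.inter hW₂, rfl⟩,
        subset_inter h1 h2,
        fun A' hA' => ⟨hA'.trans inter_subset_left, hA'.trans inter_subset_right⟩⟩
    · apply eq_univ_of_forall; intro A
      exact mem_sUnion.mpr ⟨{A : ↥(MCSet X) | (A : Set (X × ℝ)) ⊆ univ},
        ⟨univ, isOpen_univ, rfl⟩, subset_univ _⟩
  refine RegularSpace.of_exists_mem_nhds_isClosed_subset ?_
  intro A s hs
  obtain ⟨t, ⟨W, hWo, rfl⟩, hAt, hts⟩ := hB.mem_nhds_iff.mp hs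
  have hAmc : IsMinimalCusco (A : Set (X × ℝ)) := A.2
  have hAc : IsCusco (A : Set (X × ℝ)) := hAmc.1
  obtain ⟨h, hhc, hh⟩ := exists_upper_roof hcp hAc hWo hAt
  obtain ⟨g, hgc, hg⟩ := exists_lower_roof hcp hAc hWo hAt
  have hgh : ∀ x, g x < h x := fun x =>
    lt_trans (lt_of_lt_of_le (hg x).1 (hAc.sInf_le_sSup x)) (hh x).1
  set V : Set (X × ℝ) := {p | g p.1 < p.2 ∧ p.2 < h p.1} with hVd
  have hVo : IsOpen V := (isOpen_lt (hgc.comp continuous_fst) continuous_snd).inter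
    (isOpen_lt continuous_snd (hhc.comp continuous_fst))
  have hAV : (A : Set (X × ℝ)) ⊆ V := by
    rintro ⟨x, y⟩ hp
    have hyv : y ∈ valuesAt (↑A) x := hp
    rw [hAc.valuesAt_eq_Icc] at hyv
    exact ⟨lt_of_lt_of_le (hg x).1 hyv.1, lt_of_le_of_lt hyv.2 (hh x).1⟩
  have hTW : ∀ x y, g x ≤ y → y ≤ h x → (x, y) ∈ W := by
    intro x y h1 h2
    rcases le_total y (sSup (valuesAt (↑A) x)) with h3 | h3
    · exact (hg x).2 y ⟨h1, h3⟩
    · exact (hh x).2 y ⟨le_trans (hAc.sInf_le_sSup x) h3, h2⟩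
  refine ⟨closure {B : ↥(MCSet X) | (B : Set (X × ℝ)) ⊆ V}, ?_, isClosed_closure, ?_⟩
  · exact Filter.mem_of_superset ((hB.isOpen ⟨V, hVo, rfl⟩).mem_nhds hAV) subset_closure
  · refine subset_trans ?_ hts
    intro A' hA'
    have hA'mc : IsMinimalCusco (A' : Set (X × ℝ)) := A'.2
    have hA'c := hA'mc.1
    by_cases hcase : ∀ x, (valuesAt (↑A') x ∩ Icc (g x) (h x)).Nonempty
    · -- minimality case
      have hGc := hA'c.inter_tube hgc hhc hcase
      have hGeq := hA'mc.2 _ hGc inter_subset_left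
      have hsubT : (A' : Set (X × ℝ)) ⊆ {p : X × ℝ | g p.1 ≤ p.2 ∧ p.2 ≤ h p.1} := by
        intro p hp
        rw [← hGeq] at hp
        exact hp.2
      rintro ⟨x, y⟩ hp
      exact hTW x y (hsubT hp).1 (hsubT hp).2
    · exfalso
      push_neg at hcase
      obtain ⟨x₀, hx₀⟩ := hcase
      set m' := sInf (valuesAt (↑A') x₀) with hm'
      set M' := sSup (valuesAt (↑A') x₀) with hM'
      have hm'M' : m' ≤ M' := hA'c.sInf_le_sSup x₀
      have hdisj : h x₀ < m' ∨ M' < g x₀ := by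
        by_contra hcon
        push_neg at hcon
        have hy : max m' (g x₀) ∈ valuesAt (↑A') x₀ ∩ Icc (g x₀) (h x₀) := by
          constructor
          · rw [hA'c.valuesAt_eq_Icc]
            exact ⟨le_max_left _ _, max_le hm'M' hcon.2⟩
          · exact ⟨le_max_right _ _, max_le hcon.1 (le_of_lt (hgh x₀))⟩
        rw [hx₀] at hy
        exact hy
      -- the two symmetric subcases
      rcases hdisj with hup | hdown
      · set c := (h x₀ + m') / 2 with hc
        have hsubc : valuesAt (↑A') x₀ ⊆ Ioi c := by
          intro y hy
          rw [hA'c.valuesAt_eq_Icc] at hy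
          have := hy.1
          simp only [mem_Ioi]; rw [hc]; linarith
        obtain ⟨U₀, hU₀o, hxU₀, hU₀⟩ := hA'c.1 x₀ (Ioi c) isOpen_Ioi hsubc
        obtain ⟨C, ⟨hC𝓝, hCcl⟩, hCU⟩ :=
          (closed_nhds_basis x₀).mem_iff.mp (hU₀o.mem_nhds hxU₀)
        set N := interior C with hNd
        have hxN : x₀ ∈ N := mem_interior_iff_mem_nhds.mpr hC𝓝
        have hclN : closure N ⊆ U₀ :=
          subset_trans (closure_minimal interior_subset hCcl) hCU
        set O : Set (X × ℝ) := ((closure N)ᶜ ×ˢ (univ : Set ℝ)) ∪ (U₀ ×ˢ Ioi c) with hOd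
        have hOo : IsOpen O := (isClosed_closure.isOpen_compl.prod isOpen_univ).union
          (hU₀o.prod isOpen_Ioi)
        have hA'O : (A' : Set (X × ℝ)) ⊆ O := by
          rintro ⟨x, y⟩ hp
          by_cases hxc : x ∈ closure N
          · exact Or.inr ⟨hclN hxc, hU₀ x (hclN hxc) hp⟩
          · exact Or.inl ⟨hxc, mem_univ _⟩
        obtain ⟨B₀, hB₀O, hB₀V⟩ := hB.mem_closure_iff.mp hA'
          {B : ↥(MCSet X) | (B : Set (X × ℝ)) ⊆ O} ⟨O, hOo, rfl⟩ hA'O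
        obtain ⟨y₀, hy₀⟩ := (B₀.2.1.2 x₀).1
        have hOy : (x₀, y₀) ∈ O := hB₀O hy₀
        have hVy : (x₀, y₀) ∈ V := hB₀V hy₀
        have hy₀h : y₀ < h x₀ := hVy.2
        rcases hOy with hO1 | hO2
        · exact hO1.1 (subset_closure hxN)
        · have : c < y₀ := hO2.2
          rw [hc] at this; linarith
      · set c := (M' + g x₀) / 2 with hc
        have hsubc : valuesAt (↑A') x₀ ⊆ Iio c := by
          intro y hy
          rw [hA'c.valuesAt_eq_Icc] at hy
          have := hy.2
          simp only [mem_Iio]; rw [hc]; linarith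
        obtain ⟨U₀, hU₀o, hxU₀, hU₀⟩ := hA'c.1 x₀ (Iio c) isOpen_Iio hsubc
        obtain ⟨C, ⟨hC𝓝, hCcl⟩, hCU⟩ :=
          (closed_nhds_basis x₀).mem_iff.mp (hU₀o.mem_nhds hxU₀)
        set N := interior C with hNd
        have hxN : x₀ ∈ N := mem_interior_iff_mem_nhds.mpr hC𝓝
        have hclN : closure N ⊆ U₀ :=
          subset_trans (closure_minimal interior_subset hCcl) hCU
        set O : Set (X × ℝ) := ((closure N)ᶜ ×ˢ (univ : Set ℝ)) ∪ (U₀ ×ˢ Iio c) with hOd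
        have hOo : IsOpen O := (isClosed_closure.isOpen_compl.prod isOpen_univ).union
          (hU₀o.prod isOpen_Iio)
        have hA'O : (A' : Set (X × ℝ)) ⊆ O := by
          rintro ⟨x, y⟩ hp
          by_cases hxc : x ∈ closure N
          · exact Or.inr ⟨hclN hxc, hU₀ x (hclN hxc) hp⟩
          · exact Or.inl ⟨hxc, mem_univ _⟩
        obtain ⟨B₀, hB₀O, hB₀V⟩ := hB.mem_closure_iff.mp hA'
          {B : ↥(MCSet X) | (B : Set (X × ℝ)) ⊆ O} ⟨O, hOo, rfl⟩ hA'O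
        obtain ⟨y₀, hy₀⟩ := (B₀.2.1.2 x₀).1
        have hOy : (x₀, y₀) ∈ O := hB₀O hy₀
        have hVy : (x₀, y₀) ∈ V := hB₀V hy₀
        have hy₀g : g x₀ < y₀ := hVy.1
        rcases hOy with hO1 | hO2
        · exact hO1.1 (subset_closure hxN)
        · have : y₀ < c := hO2.2
          rw [hc] at this; linarith
end
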